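/- Let m ≥ 1 and ε > 0. Suppose α(t,x) = A(t)x + b(t) with A : ℝ → ℝ^{m×m} and b : ℝ → ℝ^m continuous, β(t,x) = ½ xᵀQ(t)x + q(t)ᵀx + c(t) with Q : ℝ → ℝ^{m×m} continuous symmetric-valued, q : ℝ → ℝ^m, c : ℝ → ℝ continuous, and γ : ℝ → ℂ continuous (independent of x). Let X, P : ℝ → ℝ^m, S : ℝ → ℝ, a : ℝ → ℂ, and M, N : ℝ → ℝ^{m×m} be differentiable and satisfy X'(t) = α(t,X(t)), S'(t) = β(t,X(t)), P'(t) = ∇ₓβ(t,X(t)) − [∇ₓα(t,X(t))]ᵀ P(t), a'(t) = γ(t) a(t), M'(t) = −M(t)∇ₓα(t,X(t)) − [∇ₓα(t,X(t))]ᵀ M(t), N'(t) = ∇ₓ²(P(t)·α)(t,X(t)) − ∇ₓ²β(t,X(t)) − N(t)∇ₓα(t,X(t)) − [∇ₓα(t,X(t))]ᵀ N(t), with M(0), N(0) symmetric. Then the function U(t,x) = G^ε( M(t), N(t), X(t), P(t), S(t), a(t); x ) satisfies exactly, for all t and all x ∈ ℝ^m, the equation ∂ₜU(t,x) + α(t,x)ᵀ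 ∇ₓU(t,x) = (i/ε) β(t,x) U(t,x) + γ(t) U(t,x). -/

import Mathlib

/-!
Write the beam as `a · exp (ρ + iθ)` with the real phases `ρ = -(x-X)ᵀM(x-X)/(2ε)` and
`θ = (Pᵀ(x-X) + S - (x-X)ᵀN(x-X)/2)/ε`. The transport operator `∂ₜ + α·∇ₓ` is a derivation,
and since `α(t,x) - X'(t) = A(t)(x - X(t))` exactly (α is affine), it sends a quadratic form
`(x-X)ᵀK(x-X)` with `K' = R - KA - AᵀK` to `(x-X)ᵀR(x-X)`, and a linear form `Pᵀ(x-X)` with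
`P' = r - AᵀP` to `rᵀ(x-X)`, with no remainder. Hence `(∂ₜ + α·∇ₓ)ρ = 0`, and
`(∂ₜ + α·∇ₓ)θ = β/ε` because the quadratic `β` equals its second-order Taylor polynomial at `X`.
-/

open Matrix

/-- The Gaussian beam
`G^ε(M,N,X,P,S,A;x) = A exp(−(x−X)ᵀ(M+iN)(x−X)/(2ε) + iPᵀ(x−X)/ε + iS/ε)`,
on `ℝ^m` realized as the pi type `Fin m → ℝ`. -/
noncomputable def gaussianBeamP {m : ℕ} (ε : ℝ) (M N : Matrix (Fin m) (Fin m) ℝ)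
    (X P : Fin m → ℝ) (S : ℝ) (A : ℂ) (x : Fin m → ℝ) : ℂ :=
  A * Complex.exp (
    -((∑ i, ∑ j, ((M i j : ℂ) + Complex.I * (N i j : ℂ)) * ((x i - X i : ℝ) : ℂ)
        * ((x j - X j : ℝ) : ℂ)) / (2 * (ε : ℂ)))
    + Complex.I * ((∑ i, P i * (x i - X i) : ℝ) : ℂ) / (ε : ℂ)
    + Complex.I * (S : ℂ) / (ε : ℂ))

open Complex

namespace HasDerivAt

variable {𝕜 : Type*} [NontriviallyNormedField 𝕜] {m n : Type*} [Fintype n] {t : 𝕜}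

protected theorem dotProduct {u v : 𝕜 → n → 𝕜} {u' v' : n → 𝕜}
    (hu : HasDerivAt u u' t) (hv : HasDerivAt v v' t) :
    HasDerivAt (fun s => u s ⬝ᵥ v s) (u' ⬝ᵥ v t + u t ⬝ᵥ v') t := by
  simpa only [dotProduct, ← Finset.sum_add_distrib] using
    HasDerivAt.fun_sum fun i _ => (hasDerivAt_pi.1 hu i).fun_mul (hasDerivAt_pi.1 hv i)

theorem matrix_mulVec {K : 𝕜 → Matrix m n 𝕜} {K' : Matrix m n 𝕜} {v : 𝕜 → n → 𝕜} {v' : n → 𝕜}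
    (hK : ∀ i j, HasDerivAt (fun s => K s i j) (K' i j) t) (hv : HasDerivAt v v' t) :
    HasDerivAt (fun s => K s *ᵥ v s) (K' *ᵥ v t + K t *ᵥ v') t :=
  hasDerivAt_pi.2 fun i => (hasDerivAt_pi.2 (hK i)).dotProduct hv

end HasDerivAt

theorem ContinuousLinearMap.apply_eq_sum_smul_single {ι F : Type*} [Fintype ι] [DecidableEq ι]
    [NormedAddCommGroup F] [NormedSpace ℝ F] (L : (ι → ℝ) →L[ℝ] F) (v : ι → ℝ) :
    L v = ∑ i, v i • L (Pi.single i 1) := by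
  conv_lhs => rw [← Finset.univ_sum_single v]
  simp only [map_sum]
  refine Finset.sum_congr rfl fun i _ => ?_
  rw [← map_smul, ← Pi.single_smul', smul_eq_mul, mul_one]

section Transport

variable {E F : Type*} [NormedAddCommGroup E] [NormedSpace ℝ E] [NormedAddCommGroup F]
  [NormedSpace ℝ F]

/-- `L` is the value at `(t, x)` of `(∂ₜ + v·∇ₓ) f` for the frozen vector `v`; the two partial
derivatives are taken separately, so no joint differentiability is required. -/
def HasTransportDerivAt (f : ℝ → E → F) (v : E) (L : F) (t : ℝ) (x : E) : Prop :=
  ∃ fₜ fᵥ : F, HasDerivAt (fun s => f s x) fₜ t ∧ HasDerivAt (fun s : ℝ => f t (x + s • v)) fᵥ 0 ∧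
    fₜ + fᵥ = L

theorem hasDerivAt_add_smul_sub (x v y : E) : HasDerivAt (fun s : ℝ => x + s • v - y) v 0 := by
  simpa using (((hasDerivAt_id (0 : ℝ)).smul_const v).const_add x).sub_const y

namespace HasTransportDerivAt

variable {f g : ℝ → E → F} {v x : E} {t : ℝ} {L L' : F}

theorem hasDerivAt (h : HasTransportDerivAt f v L t x) (hf : DifferentiableAt ℝ (f t) x) :
    HasDerivAt (fun s => f s x) (L - fderiv ℝ (f t) x v) t := by
  obtain ⟨fₜ, fᵥ, hₜ, hᵥ, rfl⟩ := h
  have hline : HasLineDerivAt ℝ (f t) fᵥ x v := hᵥ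
  rwa [← hf.lineDeriv_eq_fderiv, hline.lineDeriv, add_sub_cancel_right]

theorem add (hf : HasTransportDerivAt f v L t x) (hg : HasTransportDerivAt g v L' t x) :
    HasTransportDerivAt (fun s y => f s y + g s y) v (L + L') t x := by
  obtain ⟨fₜ, fᵥ, hfₜ, hfᵥ, rfl⟩ := hf
  obtain ⟨gₜ, gᵥ, hgₜ, hgᵥ, rfl⟩ := hg
  exact ⟨fₜ + gₜ, fᵥ + gᵥ, hfₜ.add hgₜ, hfᵥ.add hgᵥ, add_add_add_comm _ _ _ _⟩

theorem sub (hf : HasTransportDerivAt f v L t x) (hg : HasTransportDerivAt g v L' t x) :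
    HasTransportDerivAt (fun s y => f s y - g s y) v (L - L') t x := by
  obtain ⟨fₜ, fᵥ, hfₜ, hfᵥ, rfl⟩ := hf
  obtain ⟨gₜ, gᵥ, hgₜ, hgᵥ, rfl⟩ := hg
  exact ⟨fₜ - gₜ, fᵥ - gᵥ, hfₜ.sub hgₜ, hfᵥ.sub hgᵥ, (add_sub_add_comm _ _ _ _).symm⟩

theorem const_mul {f : ℝ → E → ℝ} {L : ℝ} (c : ℝ) (hf : HasTransportDerivAt f v L t x) :
    HasTransportDerivAt (fun s y => c * f s y) v (c * L) t x := by
  obtain ⟨fₜ, fᵥ, hₜ, hᵥ, rfl⟩ := hf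
  exact ⟨c * fₜ, c * fᵥ, hₜ.const_mul c, hᵥ.const_mul c, (mul_add _ _ _).symm⟩

theorem of_hasDerivAt {f : ℝ → F} {f' : F} (hf : HasDerivAt f f' t) :
    HasTransportDerivAt (fun s _ => f s) v f' t x :=
  ⟨f', 0, hf, hasDerivAt_const _ _, add_zero _⟩

theorem ofReal_add_I_mul {ρ θ : ℝ → E → ℝ} {Lρ Lθ : ℝ} (hρ : HasTransportDerivAt ρ v Lρ t x)
    (hθ : HasTransportDerivAt θ v Lθ t x) :
    HasTransportDerivAt (fun s y => (ρ s y : ℂ) + I * θ s y) v (Lρ + I * Lθ) t x := by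
  obtain ⟨ρₜ, ρᵥ, hρₜ, hρᵥ, rfl⟩ := hρ
  obtain ⟨θₜ, θᵥ, hθₜ, hθᵥ, rfl⟩ := hθ
  refine ⟨ρₜ + I * θₜ, ρᵥ + I * θᵥ, hρₜ.ofReal_comp.add (hθₜ.ofReal_comp.const_mul I),
    hρᵥ.ofReal_comp.add (hθᵥ.ofReal_comp.const_mul I), ?_⟩
  push_cast
  ring

theorem mul_cexp {Φ : ℝ → E → ℂ} {L : ℂ} {a : ℝ → ℂ} {a' : ℂ} (ha : HasDerivAt a a' t)
    (hΦ : HasTransportDerivAt Φ v L t x) :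
    HasTransportDerivAt (fun s y => a s * cexp (Φ s y)) v ((a' + a t * L) * cexp (Φ t x)) t x := by
  obtain ⟨Φₜ, Φᵥ, hₜ, hᵥ, rfl⟩ := hΦ
  refine ⟨a' * cexp (Φ t x) + a t * (cexp (Φ t x) * Φₜ), a t * (cexp (Φ t (x + (0 : ℝ) • v)) * Φᵥ),
    ha.mul hₜ.cexp, hᵥ.cexp.const_mul (a t), ?_⟩
  rw [zero_smul, add_zero]
  ring

end HasTransportDerivAt

end Transport

theorem Matrix.IsSymm.dotProduct_mulVec_self_expand {R n : Type*} [CommRing R] [Fintype n]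
    {Q : Matrix n n R} (hQ : Q.IsSymm) (x X : n → R) :
    x ⬝ᵥ Q *ᵥ x = X ⬝ᵥ Q *ᵥ X + 2 * ((Q *ᵥ X) ⬝ᵥ (x - X)) + (x - X) ⬝ᵥ Q *ᵥ (x - X) := by
  have hsymm : X ⬝ᵥ Q *ᵥ (x - X) = (Q *ᵥ X) ⬝ᵥ (x - X) := by
    rw [dotProduct_mulVec, ← mulVec_transpose, hQ.eq]
  obtain ⟨d, rfl⟩ : ∃ d, x = X + d := ⟨x - X, by abel⟩
  simp only [add_sub_cancel_left] at hsymm ⊢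
  rw [mulVec_add, dotProduct_add, add_dotProduct, add_dotProduct, hsymm, dotProduct_comm d]
  ring

theorem Matrix.mulVec_add_eq_mulVec_sub_add {R m n : Type*} [Ring R] [Fintype n]
    (A : Matrix m n R) (b : m → R) (x X : n → R) :
    A *ᵥ x + b = A *ᵥ (x - X) + (A *ᵥ X + b) := by
  rw [mulVec_sub]; abel

section Characteristics

variable {n : Type*} [Fintype n] {t : ℝ} {A : Matrix n n ℝ} {b : n → ℝ} {X : ℝ → n → ℝ}

theorem hasTransportDerivAt_quadForm {K : ℝ → Matrix n n ℝ} {R : Matrix n n ℝ}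
    (hX : HasDerivAt X (A *ᵥ X t + b) t)
    (hK : ∀ i j, HasDerivAt (fun s => K s i j) ((R - K t * A - Aᵀ * K t) i j) t) (x : n → ℝ) :
    HasTransportDerivAt (fun s y => (y - X s) ⬝ᵥ K s *ᵥ (y - X s)) (A *ᵥ x + b)
      ((x - X t) ⬝ᵥ R *ᵥ (x - X t)) t x := by
  have hₜ := hX.const_sub x
  have hᵥ := hasDerivAt_add_smul_sub x (A *ᵥ x + b) (X t)
  refine ⟨_, _, hₜ.dotProduct (.matrix_mulVec hK hₜ),
    hᵥ.dotProduct (.matrix_mulVec (K' := 0) (fun _ _ => hasDerivAt_const _ _) hᵥ), ?_⟩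
  rw [zero_smul, add_zero, A.mulVec_add_eq_mulVec_sub_add b x (X t)]
  set d := x - X t
  have hAT : ∀ u, d ⬝ᵥ Aᵀ *ᵥ u = (A *ᵥ d) ⬝ᵥ u := fun u => by
    rw [dotProduct_mulVec, vecMul_transpose]
  simp only [sub_mulVec, zero_mulVec, ← mulVec_mulVec, mulVec_add, mulVec_neg, dotProduct_add,
    dotProduct_sub, dotProduct_neg, add_dotProduct, neg_dotProduct, hAT, zero_add]
  ring

theorem hasTransportDerivAt_dotProduct_sub {P : ℝ → n → ℝ} {r : n → ℝ}
    (hX : HasDerivAt X (A *ᵥ X t + b) t) (hP : HasDerivAt P (r - Aᵀ *ᵥ P t) t) (x : n → ℝ) :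
    HasTransportDerivAt (fun s y => P s ⬝ᵥ (y - X s)) (A *ᵥ x + b) (r ⬝ᵥ (x - X t)) t x := by
  have hₜ := hX.const_sub x
  have hᵥ := hasDerivAt_add_smul_sub x (A *ᵥ x + b) (X t)
  refine ⟨_, _, hP.dotProduct hₜ, (hasDerivAt_const _ (P t)).dotProduct hᵥ, ?_⟩
  rw [zero_smul, add_zero, A.mulVec_add_eq_mulVec_sub_add b x (X t)]
  have hAT : (Aᵀ *ᵥ P t) ⬝ᵥ (x - X t) = P t ⬝ᵥ A *ᵥ (x - X t) := by
    rw [mulVec_transpose, ← dotProduct_mulVec]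
  simp only [sub_dotProduct, dotProduct_neg, zero_dotProduct, dotProduct_add, hAT]
  ring

end Characteristics

theorem gaussianBeamP_eq {m : ℕ} (ε : ℝ) (M N : Matrix (Fin m) (Fin m) ℝ) (X P : Fin m → ℝ)
    (S : ℝ) (A : ℂ) (x : Fin m → ℝ) :
    gaussianBeamP ε M N X P S A x =
      A * cexp (((-(2 * ε)⁻¹ * ((x - X) ⬝ᵥ M *ᵥ (x - X)) : ℝ) : ℂ) +
        I * ((ε⁻¹ * (P ⬝ᵥ (x - X) + S - 2⁻¹ * ((x - X) ⬝ᵥ N *ᵥ (x - X))) : ℝ) : ℂ)) := by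
  have hquad : ∑ i, ∑ j, ((M i j : ℂ) + I * N i j) * ((x i - X i : ℝ) : ℂ) * ((x j - X j : ℝ) : ℂ)
      = (((x - X) ⬝ᵥ M *ᵥ (x - X) : ℝ) : ℂ) + I * (((x - X) ⬝ᵥ N *ᵥ (x - X) : ℝ) : ℂ) := by
    simp only [dotProduct, mulVec, Pi.sub_apply, Finset.mul_sum, Complex.ofReal_sum,
      Complex.ofReal_mul, ← Finset.sum_add_distrib]
    refine Finset.sum_congr rfl fun i _ => Finset.sum_congr rfl fun j _ => ?_
    ring
  rw [gaussianBeamP, hquad]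
  congr 2
  simp only [dotProduct, Pi.sub_apply]
  push_cast
  ring

theorem gaussianBeam_exact_affine_quadratic_general {m : ℕ} (ε : ℝ)
    (A : ℝ → Matrix (Fin m) (Fin m) ℝ) (b : ℝ → Fin m → ℝ)
    (Q : ℝ → Matrix (Fin m) (Fin m) ℝ) (hQsymm : ∀ t, (Q t).IsSymm)
    (q : ℝ → Fin m → ℝ)
    (c : ℝ → ℝ)
    (γ : ℝ → ℂ)
    (X P : ℝ → Fin m → ℝ) (S : ℝ → ℝ) (a : ℝ → ℂ)
    (M N : ℝ → Matrix (Fin m) (Fin m) ℝ)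
    (hX : ∀ t i, HasDerivAt (fun s => X s i) ((A t *ᵥ X t + b t) i) t)
    (hS : ∀ t, HasDerivAt S
      ((1 / 2) * (X t ⬝ᵥ (Q t *ᵥ X t)) + q t ⬝ᵥ X t + c t) t)
    (hP : ∀ t i, HasDerivAt (fun s => P s i)
      ((Q t *ᵥ X t + q t - (A t)ᵀ *ᵥ P t) i) t)
    (ha : ∀ t, HasDerivAt a (γ t * a t) t)
    (hM : ∀ t i j, HasDerivAt (fun s => M s i j)
      ((-(M t * A t) - (A t)ᵀ * M t) i j) t)
    (hN : ∀ t i j, HasDerivAt (fun s => N s i j)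
      ((-(Q t) - N t * A t - (A t)ᵀ * N t) i j) t) :
    ∀ (t : ℝ) (x : Fin m → ℝ),
      DifferentiableAt ℝ
        (fun y => gaussianBeamP ε (M t) (N t) (X t) (P t) (S t) (a t) y) x ∧
      HasDerivAt (fun s => gaussianBeamP ε (M s) (N s) (X s) (P s) (S s) (a s) x)
        ((Complex.I / (ε : ℂ))
            * (((1 / 2) * (x ⬝ᵥ (Q t *ᵥ x)) + q t ⬝ᵥ x + c t : ℝ) : ℂ)
            * gaussianBeamP ε (M t) (N t) (X t) (P t) (S t) (a t) x
          + γ t * gaussianBeamP ε (M t) (N t) (X t) (P t) (S t) (a t) x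
          - ∑ i, (((A t *ᵥ x + b t) i : ℝ) : ℂ)
              * fderiv ℝ (fun y => gaussianBeamP ε (M t) (N t) (X t) (P t) (S t) (a t) y)
                  x (Pi.single i 1)) t := by
  intro t x
  have hdiff : DifferentiableAt ℝ
      (fun y => gaussianBeamP ε (M t) (N t) (X t) (P t) (S t) (a t) y) x := by
    unfold gaussianBeamP; fun_prop
  refine ⟨hdiff, ?_⟩
  have hXt : HasDerivAt X (A t *ᵥ X t + b t) t := hasDerivAt_pi.2 (hX t)
  have hρ := (hasTransportDerivAt_quadForm (R := 0) hXt
    (fun i j => by simpa only [zero_sub] using hM t i j) x).const_mul (-(2 * ε)⁻¹)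
  have hθ := (((hasTransportDerivAt_dotProduct_sub hXt (hasDerivAt_pi.2 (hP t)) x).add
    (.of_hasDerivAt (hS t))).sub
      ((hasTransportDerivAt_quadForm hXt (hN t) x).const_mul 2⁻¹)).const_mul ε⁻¹
  have hU := ((hρ.ofReal_add_I_mul hθ).mul_cexp (ha t)).hasDerivAt
  simp only [gaussianBeamP_eq] at hdiff ⊢
  simp_rw [← Complex.real_smul, ← ContinuousLinearMap.apply_eq_sum_smul_single]
  refine (hU hdiff).congr_deriv ?_
  have hβ : (Q t *ᵥ X t + q t) ⬝ᵥ (x - X t) + (1 / 2 * X t ⬝ᵥ Q t *ᵥ X t + q t ⬝ᵥ X t + c t)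
      - 2⁻¹ * (x - X t) ⬝ᵥ -Q t *ᵥ (x - X t) = 1 / 2 * x ⬝ᵥ Q t *ᵥ x + q t ⬝ᵥ x + c t := by
    rw [(hQsymm t).dotProduct_mulVec_self_expand x (X t)]
    simp only [neg_mulVec, dotProduct_neg, add_dotProduct, dotProduct_sub]
    ring
  rw [hβ, zero_mulVec, dotProduct_zero, mul_zero]
  push_cast
  ring

/-- When `α(t,x) = A(t)x + b(t)` is affine in `x`, `β(t,x) = ½xᵀQ(t)x + q(t)ᵀx + c(t)`
is quadratic in `x`, and `γ = γ(t)` is independent of `x`, the Gaussian beam ansatz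
whose parameters solve the beam ODE system satisfies the transport equation
`∂ₜU + αᵀ∇ₓU = (i/ε)βU + γU` exactly (no `O(ε^{1/2})` residual). -/
theorem gaussianBeam_exact_affine_quadratic {m : ℕ} (hm : 1 ≤ m) (ε : ℝ) (hε : 0 < ε)
    (A : ℝ → Matrix (Fin m) (Fin m) ℝ) (b : ℝ → Fin m → ℝ)
    (hA : ∀ i j, Continuous fun t => A t i j) (hb : ∀ i, Continuous fun t => b t i)
    (Q : ℝ → Matrix (Fin m) (Fin m) ℝ) (hQsymm : ∀ t, (Q t).IsSymm)
    (hQ : ∀ i j, Continuous fun t => Q t i j)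
    (q : ℝ → Fin m → ℝ) (hq : ∀ i, Continuous fun t => q t i)
    (c : ℝ → ℝ) (hc : Continuous c)
    (γ : ℝ → ℂ) (hγ : Continuous γ)
    (X P : ℝ → Fin m → ℝ) (S : ℝ → ℝ) (a : ℝ → ℂ)
    (M N : ℝ → Matrix (Fin m) (Fin m) ℝ)
    (hX : ∀ t i, HasDerivAt (fun s => X s i) ((A t *ᵥ X t + b t) i) t)
    (hS : ∀ t, HasDerivAt S
      ((1 / 2) * (X t ⬝ᵥ (Q t *ᵥ X t)) + q t ⬝ᵥ X t + c t) t)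
    (hP : ∀ t i, HasDerivAt (fun s => P s i)
      ((Q t *ᵥ X t + q t - (A t)ᵀ *ᵥ P t) i) t)
    (ha : ∀ t, HasDerivAt a (γ t * a t) t)
    (hM : ∀ t i j, HasDerivAt (fun s => M s i j)
      ((-(M t * A t) - (A t)ᵀ * M t) i j) t)
    (hN : ∀ t i j, HasDerivAt (fun s => N s i j)
      ((-(Q t) - N t * A t - (A t)ᵀ * N t) i j) t)
    (hM0 : (M 0).IsSymm) (hN0 : (N 0).IsSymm) :
    ∀ (t : ℝ) (x : Fin m → ℝ),
      DifferentiableAt ℝ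
        (fun y => gaussianBeamP ε (M t) (N t) (X t) (P t) (S t) (a t) y) x ∧
      HasDerivAt (fun s => gaussianBeamP ε (M s) (N s) (X s) (P s) (S s) (a s) x)
        ((Complex.I / (ε : ℂ))
            * (((1 / 2) * (x ⬝ᵥ (Q t *ᵥ x)) + q t ⬝ᵥ x + c t : ℝ) : ℂ)
            * gaussianBeamP ε (M t) (N t) (X t) (P t) (S t) (a t) x
          + γ t * gaussianBeamP ε (M t) (N t) (X t) (P t) (S t) (a t) x
          - ∑ i, (((A t *ᵥ x + b t) i : ℝ) : ℂ)
              * fderiv ℝ (fun y => gaussianBeamP ε (M t) (N t) (X t) (P t) (S t) (a t) y)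
                  x (Pi.single i 1)) t :=
  gaussianBeam_exact_affine_quadratic_general ε A b Q hQsymm q c γ X P S a M N hX hS hP ha hM hN
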